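/- Let p be a completely join-irreducible element of a lattice L with the weak minimal join-cover refinement property. Then dₚ(p_*, p) = 1 if p is not related to itself by ◁ (the transitive closure of join-dependency), and dₚ(p_*, p) = ∞ if p ◁ p. -/
import Mathlib


section
variable {L : Type*} [Lattice L]

def IsJoinCover (a : L) (X : Finset L) : Prop :=
  (∀ x ∈ X, ¬ IsBot x) ∧ ∃ h : X.Nonempty, a ≤ X.sup' h id

def IsNontrivialJoinCover (a : L) (X : Finset L) : Prop :=
  IsJoinCover a X ∧ ∀ x ∈ X, ¬ a ≤ x

def Refines (X Y : Finset L) : Prop := ∀ x ∈ X, ∃ y ∈ Y, x ≤ y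

def IsMinimalNontrivialJoinCover (a : L) (X : Finset L) : Prop :=
  IsNontrivialJoinCover a X ∧
    ∀ Y : Finset L, IsNontrivialJoinCover a Y → Refines Y X → X ⊆ Y

/-- The weak minimal join-cover refinement property. -/
def WMJCRP (L : Type*) [Lattice L] : Prop :=
  ∀ a : L, ¬ IsBot a → ∀ X : Finset L, IsNontrivialJoinCover a X →
    ∃ Y : Finset L, IsMinimalNontrivialJoinCover a Y ∧ Refines Y X

/-- The set of join-irreducible elements below `a`. -/
def Jset (a : L) : Set L := {q | SupIrred q ∧ q ≤ a}

/-- The join-dependency relation on join-irreducible elements. -/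
def JoinDep (p q : L) : Prop :=
  SupIrred p ∧ SupIrred q ∧ p ≠ q ∧
    ∃ x : L, p ≤ q ⊔ x ∧ ∀ y < q, ¬ p ≤ y ⊔ x

/-- `[p]^◁`, where `◁` is the transitive closure of join-dependency. -/
def trCl (p : L) : Set L := {q | Relation.TransGen JoinDep p q}

/-- `[p]^⊴`, where `⊴` is the reflexive-transitive closure of join-dependency. -/
def rtrCl (p : L) : Set L := {q | Relation.ReflTransGen JoinDep p q}

open scoped Classical in
/-- The dimension function `dₚ`. -/
noncomputable def dFun (p x y : L) : ℕ∞ :=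
  if Jset x ∩ rtrCl p = Jset y ∩ rtrCl p then 0
  else if p ∈ Jset y ∧ p ∉ Jset x ∧ Jset x ∩ trCl p = Jset y ∩ trCl p then 1
  else ⊤

/-- `p` is completely join-irreducible with unique lower cover `pstar`. -/
def IsCJI (p pstar : L) : Prop :=
  pstar < p ∧ ∀ x < p, x ≤ pstar

end

/-- For a completely join-irreducible `p` in a lattice with the weak minimal join-cover
refinement property, `dₚ(p_*, p) = 1` if `¬ p ◁ p`, and `dₚ(p_*, p) = ∞` if `p ◁ p`. -/
theorem dFun_pstar_p {L : Type*} [Lattice L] (hL : WMJCRP L)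
    (p pstar : L) (hp : IsCJI p pstar) :
    (¬ Relation.TransGen JoinDep p p → dFun p pstar p = 1) ∧
    (Relation.TransGen JoinDep p p → dFun p pstar p = ⊤) := by
  have hplt : pstar < p := hp.1
  have hsup : SupIrred p := by
    constructor
    · exact fun h => hplt.not_ge (h hplt.le)
    · intro b c hbc
      by_contra h
      push_neg at h
      have hb : b < p := lt_of_le_of_ne (hbc ▸ le_sup_left) h.1
      have hc : c < p := lt_of_le_of_ne (hbc ▸ le_sup_right) h.2
      have := sup_le (hp.2 b hb) (hp.2 c hc)
      rw [hbc] at this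
      exact hplt.not_ge this
  have hpJ : p ∈ Jset p := ⟨hsup, le_refl p⟩
  have hpnJ : p ∉ Jset pstar := fun h => hplt.not_ge h.2
  have hne : Jset pstar ∩ rtrCl p ≠ Jset p ∩ rtrCl p := by
    intro h
    have : p ∈ Jset pstar ∩ rtrCl p := h ▸ ⟨hpJ, Relation.ReflTransGen.refl⟩
    exact hpnJ this.1
  constructor
  · intro hnd
    unfold dFun
    rw [if_neg hne, if_pos]
    refine ⟨hpJ, hpnJ, ?_⟩
    ext q
    simp only [Set.mem_inter_iff, trCl, Set.mem_setOf_eq]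
    constructor
    · rintro ⟨hq, ht⟩
      exact ⟨⟨hq.1, hq.2.trans hplt.le⟩, ht⟩
    · rintro ⟨hq, ht⟩
      refine ⟨⟨hq.1, ?_⟩, ht⟩
      rcases eq_or_lt_of_le hq.2 with rfl | hlt
      · exact absurd ht hnd
      · exact hp.2 _ hlt
  · intro hd
    unfold dFun
    rw [if_neg hne, if_neg]
    rintro ⟨_, _, heq⟩
    have : p ∈ Jset pstar ∩ trCl p := heq ▸ ⟨hpJ, hd⟩
    exact hpnJ this.1
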